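/- arXiv:1804.08991 — 2 statements merged into one kernel-verified Lean document; each statement's English description precedes it below -/
import Mathlib

section
/- For any graph G, any subset S of vertices, and any vertex x, \gamma_g'(G|S) \le \gamma_g'(G|(S \cup {x})) + 2. -/
open Finset
open scoped Classical

variable {V : Type*}

/-- The closed neighborhood `N[v]` of a vertex, as a finset. -/
noncomputable def closedNbhd [Fintype V] (G : SimpleGraph V) (v : V) : Finset V :=
  Finset.univ.filter (fun u => u = v ∨ G.Adj v u)

/-- The legal moves in the domination game when `D` is the set of dominated vertices:
vertices whose closed neighborhood is not already dominated. -/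
noncomputable def legalMoves [Fintype V] (G : SimpleGraph V) (D : Finset V) : Finset V :=
  Finset.univ.filter (fun v => ¬ closedNbhd G v ⊆ D)

lemma legalMoves_nonempty [Fintype V] (G : SimpleGraph V) {D : Finset V}
    (h : D ≠ Finset.univ) : (legalMoves G D).Nonempty := by
  obtain ⟨v, hv⟩ : ∃ v, v ∉ D := by
    by_contra hc
    push_neg at hc
    exact h (Finset.eq_univ_iff_forall.2 hc)
  refine ⟨v, ?_⟩
  simp only [legalMoves, Finset.mem_filter, Finset.mem_univ, true_and]
  intro hsub
  exact hv (hsub (by simp [closedNbhd]))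

lemma card_lt_of_legal [Fintype V] (G : SimpleGraph V) {D : Finset V} {v : V}
    (hv : v ∈ legalMoves G D) :
    (Finset.univ \ (D ∪ closedNbhd G v)).card < (Finset.univ \ D).card := by
  simp only [legalMoves, Finset.mem_filter, Finset.mem_univ, true_and] at hv
  obtain ⟨u, hu1, hu2⟩ := Finset.not_subset.1 hv
  apply Finset.card_lt_card
  constructor
  · exact Finset.sdiff_subset_sdiff (le_refl _) Finset.subset_union_left
  · intro hsub
    have := hsub (Finset.mem_sdiff.2 ⟨Finset.mem_univ u, hu2⟩)
    simp only [Finset.mem_sdiff, Finset.mem_union] at this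
    exact this.2 (Or.inr hu1)

/-- Optimal number of moves in the domination game on the partially dominated graph `G|D`;
`turn = true` means Dominator (the minimizer) moves next, `turn = false` means Staller
(the maximizer) moves next.  Every move must dominate a not-yet-dominated vertex and the
game ends when all vertices are dominated. -/
noncomputable def gameVal [Fintype V] (G : SimpleGraph V) : Bool → Finset V → ℕ
  | turn, D =>
    if h : D = Finset.univ then 0
    else
      have hne : (legalMoves G D).attach.Nonempty :=
        (Finset.attach_nonempty_iff).2 (legalMoves_nonempty G h)
      if turn then
        1 + (legalMoves G D).attach.inf' hne
          (fun v => gameVal G false (D ∪ closedNbhd G v.1))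
      else
        1 + (legalMoves G D).attach.sup' hne
          (fun v => gameVal G true (D ∪ closedNbhd G v.1))
  termination_by turn D => (Finset.univ \ D).card
  decreasing_by all_goals exact card_lt_of_legal G v.2

/-- The Dominator-start game domination number `γ_g(G|S)` of the partially dominated graph. -/
noncomputable def gammaG [Fintype V] (G : SimpleGraph V) (S : Finset V) : ℕ :=
  gameVal G true S

/-- The Staller-start game domination number `γ_g'(G|S)` of the partially dominated graph. -/
noncomputable def gammaG' [Fintype V] (G : SimpleGraph V) (S : Finset V) : ℕ :=
  gameVal G false S

/-- Optimal number of (non-pass) moves in the Staller `p`-pass domination game on `G|D`: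
the Dominator-start game in which Staller may additionally pass at most `p` times. -/
noncomputable def passVal [Fintype V] (G : SimpleGraph V) : Bool → ℕ → Finset V → ℕ
  | turn, p, D =>
    if h : D = Finset.univ then 0
    else
      have hne : (legalMoves G D).attach.Nonempty :=
        (Finset.attach_nonempty_iff).2 (legalMoves_nonempty G h)
      if turn then
        1 + (legalMoves G D).attach.inf' hne
          (fun v => passVal G false p (D ∪ closedNbhd G v.1))
      else
        match p with
        | 0 =>
          1 + (legalMoves G D).attach.sup' hne
            (fun v => passVal G true 0 (D ∪ closedNbhd G v.1))
        | q + 1 =>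
          max
            (1 + (legalMoves G D).attach.sup' hne
              (fun v => passVal G true (q + 1) (D ∪ closedNbhd G v.1)))
            (passVal G true q D)
  termination_by turn p D => ((Finset.univ \ D).card, p)
  decreasing_by
  · exact Prod.Lex.left _ _ (card_lt_of_legal G v.2)
  · exact Prod.Lex.left _ _ (card_lt_of_legal G v.2)
  · exact Prod.Lex.left _ _ (card_lt_of_legal G v.2)
  · exact Prod.Lex.right _ (Nat.lt_succ_self q)

/-- `γ_g^{St,p}(G)`: the Staller `p`-pass game domination number. -/
noncomputable def gammaPass [Fintype V] (G : SimpleGraph V) (p : ℕ) : ℕ :=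
  passVal G true p ∅

/-- Value (in `ℤ`) of the Dominator `1`-pass game on `G|D` in which the payoff is the
number of moves made minus the number of passes used by Dominator; Dominator minimizes,
Staller maximizes.  `turn = true` means it is Dominator's move, `pass = true` means the
pass is still available to Dominator. -/
noncomputable def domPassVal [Fintype V] (G : SimpleGraph V) : Bool → Bool → Finset V → ℤ
  | turn, pass, D =>
    if h : D = Finset.univ then 0
    else
      have hne : (legalMoves G D).attach.Nonempty :=
        (Finset.attach_nonempty_iff).2 (legalMoves_nonempty G h)
      if turn then
        match pass with
        | false =>
          1 + (legalMoves G D).attach.inf' hne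
            (fun v => domPassVal G false false (D ∪ closedNbhd G v.1))
        | true =>
          min
            (1 + (legalMoves G D).attach.inf' hne
              (fun v => domPassVal G false true (D ∪ closedNbhd G v.1)))
            (domPassVal G false false D - 1)
      else
        1 + (legalMoves G D).attach.sup' hne
          (fun v => domPassVal G true pass (D ∪ closedNbhd G v.1))
  termination_by turn pass D => ((Finset.univ \ D).card, pass.toNat)
  decreasing_by
  · exact Prod.Lex.left _ _ (card_lt_of_legal G v.2)
  · exact Prod.Lex.left _ _ (card_lt_of_legal G v.2)
  · exact Prod.Lex.right _ (by norm_num)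
  · exact Prod.Lex.left _ _ (card_lt_of_legal G v.2)

/-- A graph is a double-Staller graph if, in the Dominator `1`-pass game, Staller has a
strategy forcing at least `γ_g(G) + p` moves, where `p ∈ {0,1}` is the number of passes
used by Dominator.  Equivalently, the optimal value of "moves minus Dominator passes" in
that game is at least `γ_g(G)`. -/
def IsDoubleStaller [Fintype V] (G : SimpleGraph V) : Prop :=
  (gammaG G ∅ : ℤ) ≤ domPassVal G true true ∅

/-- An edge cut of `G`: a set of edges whose removal disconnects `G`. -/
def IsEdgeCut (G : SimpleGraph V) (C : Set (Sym2 V)) : Prop :=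
  C ⊆ G.edgeSet ∧ ¬ (G.deleteEdges C).Connected

/-- A minimal edge cut: no proper subset is an edge cut. -/
def IsMinimalEdgeCut (G : SimpleGraph V) (C : Set (Sym2 V)) : Prop :=
  IsEdgeCut G C ∧ ∀ C' ⊂ C, ¬ IsEdgeCut G C'

/-- A minimum edge cut: an edge cut of the smallest possible cardinality (this
cardinality is the edge-connectivity `κ'(G)`). -/
def IsMinimumEdgeCut (G : SimpleGraph V) (C : Set (Sym2 V)) : Prop :=
  IsEdgeCut G C ∧ ∀ C', IsEdgeCut G C' → C.ncard ≤ C'.ncard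

/-- A graph is traceable if it contains a Hamiltonian path. -/
def Traceable (G : SimpleGraph V) : Prop :=
  ∃ (a b : V) (p : G.Walk a b), p.IsHamiltonian
/-- The disjoint union of two graphs. -/
def sumGraph {V₁ V₂ : Type*} (G₁ : SimpleGraph V₁) (G₂ : SimpleGraph V₂) :
    SimpleGraph (V₁ ⊕ V₂) :=
  SimpleGraph.fromRel (fun a b =>
    match a, b with
    | Sum.inl u, Sum.inl w => G₁.Adj u w
    | Sum.inr u, Sum.inr w => G₂.Adj u w
    | _, _ => False)

/-- The graph `H_{x,3}`: two disjoint copies of `H` (the first copy on `Sum.inl ∘ Sum.inl`,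
the second on `Sum.inl ∘ Sum.inr`) joined by a path of length 3 from `x` to its copy `x'`
through the two internal vertices `y = Sum.inr 0` (adjacent to `x`) and
`y' = Sum.inr 1` (adjacent to `x'`). -/
def Hx3 (H : SimpleGraph V) (x : V) : SimpleGraph ((V ⊕ V) ⊕ Fin 2) :=
  SimpleGraph.fromRel (fun a b =>
    match a, b with
    | Sum.inl (Sum.inl u), Sum.inl (Sum.inl w) => H.Adj u w
    | Sum.inl (Sum.inr u), Sum.inl (Sum.inr w) => H.Adj u w
    | Sum.inl (Sum.inl u), Sum.inr i => u = x ∧ i = 0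
    | Sum.inl (Sum.inr u), Sum.inr i => u = x ∧ i = 1
    | Sum.inr i, Sum.inr j => i ≠ j
    | _, _ => False)

/-- The tree `T_n`: a star `K_{1,n}` with center `Sum.inl ()`, support vertices
`Sum.inr (Sum.inl i)`, and four leaves `Sum.inr (Sum.inr (i, l))` attached to each
support vertex. -/
def Tn (n : ℕ) : SimpleGraph (Unit ⊕ (Fin n ⊕ Fin n × Fin 4)) :=
  SimpleGraph.fromRel (fun a b =>
    match a, b with
    | Sum.inl _, Sum.inr (Sum.inl _) => True
    | Sum.inr (Sum.inl i), Sum.inr (Sum.inr jl) => i = jl.1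
    | _, _ => False)

/-- The graph `K_k(H)`: the disjoint union of the complete graph `K_k` (on `Fin k`,
embedded via `Sum.inl`) and the graph `H` (embedded via `Sum.inr`), together with the
two extra edges `au` and `bv`. -/
def KkH {W : Type*} (k : ℕ) (H : SimpleGraph W) (u v : Fin k) (a b : W) :
    SimpleGraph (Fin k ⊕ W) :=
  SimpleGraph.fromRel (fun s t =>
    match s, t with
    | Sum.inl i, Sum.inl j => i ≠ j
    | Sum.inr w₁, Sum.inr w₂ => H.Adj w₁ w₂
    | Sum.inl i, Sum.inr w => (i = u ∧ w = a) ∨ (i = v ∧ w = b)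
    | _, _ => False)

section Aux

variable [Fintype V] (G : SimpleGraph V)

lemma mem_closedNbhd_self (v : V) : v ∈ closedNbhd G v := by simp [closedNbhd]

lemma legalMoves_anti {D D' : Finset V} (h : D ⊆ D') :
    legalMoves G D' ⊆ legalMoves G D := by
  intro v hv
  simp only [legalMoves, Finset.mem_filter, Finset.mem_univ, true_and] at hv ⊢
  exact fun hc => hv (hc.trans h)

lemma gameVal_univ (t : Bool) : gameVal G t Finset.univ = 0 := by
  rw [gameVal]; simp

lemma gameVal_true_eq {D : Finset V} (h : D ≠ Finset.univ) :
    gameVal G true D = 1 + (legalMoves G D).attach.inf'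
      ((Finset.attach_nonempty_iff).2 (legalMoves_nonempty G h))
      (fun v => gameVal G false (D ∪ closedNbhd G v.1)) := by
  conv_lhs => rw [gameVal]
  simp [h]

lemma gameVal_false_eq {D : Finset V} (h : D ≠ Finset.univ) :
    gameVal G false D = 1 + (legalMoves G D).attach.sup'
      ((Finset.attach_nonempty_iff).2 (legalMoves_nonempty G h))
      (fun v => gameVal G true (D ∪ closedNbhd G v.1)) := by
  conv_lhs => rw [gameVal]
  simp [h]

lemma gameVal_true_le {D : Finset V} (h : D ≠ Finset.univ) {v : V}
    (hv : v ∈ legalMoves G D) :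
    gameVal G true D ≤ 1 + gameVal G false (D ∪ closedNbhd G v) := by
  rw [gameVal_true_eq G h]
  exact Nat.add_le_add_left
    (Finset.inf'_le _ (Finset.mem_attach _ (⟨v, hv⟩ : {y // y ∈ legalMoves G D}))) 1

lemma le_gameVal_false {D : Finset V} (h : D ≠ Finset.univ) {v : V}
    (hv : v ∈ legalMoves G D) :
    1 + gameVal G true (D ∪ closedNbhd G v) ≤ gameVal G false D := by
  rw [gameVal_false_eq G h]
  exact Nat.add_le_add_left
    (Finset.le_sup' (fun w : {y // y ∈ legalMoves G D} => gameVal G true (D ∪ closedNbhd G w.1))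
      (Finset.mem_attach _ (⟨v, hv⟩ : {y // y ∈ legalMoves G D}))) 1

lemma exists_gameVal_true_eq {D : Finset V} (h : D ≠ Finset.univ) :
    ∃ v ∈ legalMoves G D,
      gameVal G true D = 1 + gameVal G false (D ∪ closedNbhd G v) := by
  obtain ⟨w, _, hval⟩ := Finset.exists_mem_eq_inf'
    ((Finset.attach_nonempty_iff).2 (legalMoves_nonempty G h))
    (fun v : {y // y ∈ legalMoves G D} => gameVal G false (D ∪ closedNbhd G v.1))
  exact ⟨w.1, w.2, by rw [gameVal_true_eq G h, hval]⟩

lemma exists_gameVal_false_eq {D : Finset V} (h : D ≠ Finset.univ) :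
    ∃ v ∈ legalMoves G D,
      gameVal G false D = 1 + gameVal G true (D ∪ closedNbhd G v) := by
  obtain ⟨w, _, hval⟩ := Finset.exists_mem_eq_sup'
    ((Finset.attach_nonempty_iff).2 (legalMoves_nonempty G h))
    (fun v : {y // y ∈ legalMoves G D} => gameVal G true (D ∪ closedNbhd G v.1))
  exact ⟨w.1, w.2, by rw [gameVal_false_eq G h, hval]⟩

/-- Continuation principle together with `|γ_g - γ_g'| ≤ 1`, proved by simultaneous
strong induction on the number of undominated vertices. -/
lemma gameVal_PQ (n : ℕ) :
    (∀ A B : Finset V, (Finset.univ \ A).card ≤ n → A ⊆ B → ∀ t : Bool,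
        gameVal G t B ≤ gameVal G t A) ∧
    (∀ D : Finset V, (Finset.univ \ D).card ≤ n →
        gameVal G true D ≤ gameVal G false D + 1 ∧
        gameVal G false D ≤ gameVal G true D + 1) := by
  induction n using Nat.strong_induction_on with
  | _ n ih =>
    have hP : ∀ A B : Finset V, (Finset.univ \ A).card ≤ n → A ⊆ B → ∀ t : Bool,
        gameVal G t B ≤ gameVal G t A := by
      intro A B hn hAB t
      by_cases hB : B = Finset.univ
      · rw [hB, gameVal_univ]; exact Nat.zero_le _
      have hA : A ≠ Finset.univ := fun hc => hB (Finset.univ_subset_iff.1 (hc ▸ hAB))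
      cases t with
      | false =>
        obtain ⟨v, hv, hval⟩ := exists_gameVal_false_eq G hB
        have hvA : v ∈ legalMoves G A := legalMoves_anti G hAB hv
        have hlt : (Finset.univ \ (A ∪ closedNbhd G v)).card < n :=
          lt_of_lt_of_le (card_lt_of_legal G hvA) hn
        have h1 : gameVal G true (B ∪ closedNbhd G v) ≤
            gameVal G true (A ∪ closedNbhd G v) :=
          (ih _ hlt).1 _ _ le_rfl (Finset.union_subset_union_left hAB) true
        calc gameVal G false B = 1 + gameVal G true (B ∪ closedNbhd G v) := hval
          _ ≤ 1 + gameVal G true (A ∪ closedNbhd G v) := Nat.add_le_add_left h1 1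
          _ ≤ gameVal G false A := le_gameVal_false G hA hvA
      | true =>
        obtain ⟨v, hv, hval⟩ := exists_gameVal_true_eq G hA
        have hlt : (Finset.univ \ (A ∪ closedNbhd G v)).card < n :=
          lt_of_lt_of_le (card_lt_of_legal G hv) hn
        by_cases hvB : v ∈ legalMoves G B
        · have h1 : gameVal G false (B ∪ closedNbhd G v) ≤
              gameVal G false (A ∪ closedNbhd G v) :=
            (ih _ hlt).1 _ _ le_rfl (Finset.union_subset_union_left hAB) false
          calc gameVal G true B ≤ 1 + gameVal G false (B ∪ closedNbhd G v) :=
                gameVal_true_le G hB hvB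
            _ ≤ 1 + gameVal G false (A ∪ closedNbhd G v) := Nat.add_le_add_left h1 1
            _ = gameVal G true A := hval.symm
        · -- `N[v] ⊆ B`, so `A ∪ N[v] ⊆ B`
          have hNv : closedNbhd G v ⊆ B := by
            by_contra hc
            exact hvB (by simp [legalMoves, hc])
          have hsub : A ∪ closedNbhd G v ⊆ B := Finset.union_subset hAB hNv
          have h1 : gameVal G true B ≤ gameVal G true (A ∪ closedNbhd G v) :=
            (ih _ hlt).1 _ _ le_rfl hsub true
          have h2 : gameVal G true (A ∪ closedNbhd G v) ≤
              gameVal G false (A ∪ closedNbhd G v) + 1 :=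
            ((ih _ hlt).2 _ le_rfl).1
          omega
    refine ⟨hP, ?_⟩
    intro D hn
    by_cases hD : D = Finset.univ
    · simp [hD, gameVal_univ]
    constructor
    · obtain ⟨v, hv, hval⟩ := exists_gameVal_false_eq G hD
      have hlt : (Finset.univ \ (D ∪ closedNbhd G v)).card < n :=
        lt_of_lt_of_le (card_lt_of_legal G hv) hn
      have h1 : gameVal G true D ≤ 1 + gameVal G false (D ∪ closedNbhd G v) :=
        gameVal_true_le G hD hv
      have h2 : gameVal G false (D ∪ closedNbhd G v) ≤
          gameVal G true (D ∪ closedNbhd G v) + 1 := ((ih _ hlt).2 _ le_rfl).2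
      omega
    · obtain ⟨v, hv, hval⟩ := exists_gameVal_false_eq G hD
      have h1 : gameVal G true (D ∪ closedNbhd G v) ≤ gameVal G true D :=
        hP _ _ hn Finset.subset_union_left true
      omega

lemma gameVal_continuation {A B : Finset V} (hAB : A ⊆ B) (t : Bool) :
    gameVal G t B ≤ gameVal G t A :=
  (gameVal_PQ G (Finset.univ \ A).card).1 A B le_rfl hAB t

lemma gameVal_true_le_false (D : Finset V) :
    gameVal G true D ≤ gameVal G false D + 1 :=
  ((gameVal_PQ G (Finset.univ \ D).card).2 D le_rfl).1

/-- The key step: adding one dominated vertex costs Staller at most 2 moves. -/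
lemma gameVal_insert_le (x : V) (n : ℕ) :
    ∀ D : Finset V, (Finset.univ \ D).card ≤ n → ∀ t : Bool,
      gameVal G t D ≤ gameVal G t (insert x D) + 2 := by
  induction n using Nat.strong_induction_on with
  | _ n ih =>
    intro D hn t
    by_cases hD : D = Finset.univ
    · rw [hD, gameVal_univ]; exact Nat.zero_le _
    by_cases hxD : x ∈ D
    · rw [Finset.insert_eq_self.2 hxD]; omega
    by_cases hins : insert x D = Finset.univ
    · -- the only undominated vertex is `x`; any legal move finishes the game
      have hall : ∀ v ∈ legalMoves G D, D ∪ closedNbhd G v = Finset.univ := by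
        intro v hv
        simp only [legalMoves, Finset.mem_filter, Finset.mem_univ, true_and] at hv
        obtain ⟨u, hu1, hu2⟩ := Finset.not_subset.1 hv
        have hux : u = x := by
          by_contra hc
          have : u ∈ insert x D := hins ▸ Finset.mem_univ u
          rcases Finset.mem_insert.1 this with h | h
          · exact hc h
          · exact hu2 h
        apply Finset.eq_univ_iff_forall.2
        intro w
        have hw : w ∈ insert x D := hins ▸ Finset.mem_univ w
        rcases Finset.mem_insert.1 hw with h | h
        · exact Finset.mem_union_right _ (h ▸ hux ▸ hu1)
        · exact Finset.mem_union_left _ h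
      cases t with
      | true =>
        obtain ⟨v, hv, hval⟩ := exists_gameVal_true_eq G hD
        rw [hval, hall v hv, gameVal_univ]
        omega
      | false =>
        obtain ⟨v, hv, hval⟩ := exists_gameVal_false_eq G hD
        rw [hval, hall v hv, gameVal_univ]
        omega
    cases t with
    | true =>
      obtain ⟨v, hv, hval⟩ := exists_gameVal_true_eq G hins
      have hvD : v ∈ legalMoves G D :=
        legalMoves_anti G (Finset.subset_insert x D) hv
      have hlt : (Finset.univ \ (D ∪ closedNbhd G v)).card < n :=
        lt_of_lt_of_le (card_lt_of_legal G hvD) hn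
      have h1 : gameVal G true D ≤ 1 + gameVal G false (D ∪ closedNbhd G v) :=
        gameVal_true_le G hD hvD
      have h2 : gameVal G false (D ∪ closedNbhd G v) ≤
          gameVal G false (insert x (D ∪ closedNbhd G v)) + 2 :=
        ih _ hlt _ le_rfl false
      have h3 : insert x D ∪ closedNbhd G v = insert x (D ∪ closedNbhd G v) :=
        Finset.insert_union x D _
      rw [hval, h3] at *
      omega
    | false =>
      obtain ⟨v, hv, hval⟩ := exists_gameVal_false_eq G hD
      by_cases hvB : v ∈ legalMoves G (insert x D)
      · have hlt : (Finset.univ \ (D ∪ closedNbhd G v)).card < n :=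
          lt_of_lt_of_le (card_lt_of_legal G hv) hn
        have h2 : gameVal G true (D ∪ closedNbhd G v) ≤
            gameVal G true (insert x (D ∪ closedNbhd G v)) + 2 :=
          ih _ hlt _ le_rfl true
        have h3 : insert x D ∪ closedNbhd G v = insert x (D ∪ closedNbhd G v) :=
          Finset.insert_union x D _
        have h4 : 1 + gameVal G true (insert x D ∪ closedNbhd G v) ≤
            gameVal G false (insert x D) := le_gameVal_false G hins hvB
        rw [h3] at h4
        omega
      · have hNv : closedNbhd G v ⊆ insert x D := by
          by_contra hc
          exact hvB (by simp [legalMoves, hc])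
        have hx : x ∈ closedNbhd G v := by
          simp only [legalMoves, Finset.mem_filter, Finset.mem_univ, true_and] at hv
          obtain ⟨u, hu1, hu2⟩ := Finset.not_subset.1 hv
          rcases Finset.mem_insert.1 (hNv hu1) with h | h
          · exact h ▸ hu1
          · exact absurd h hu2
        have heq : D ∪ closedNbhd G v = insert x D := by
          apply Finset.Subset.antisymm
          · exact Finset.union_subset (Finset.subset_insert x D) hNv
          · intro w hw
            rcases Finset.mem_insert.1 hw with h | h
            · exact Finset.mem_union_right _ (h ▸ hx)
            · exact Finset.mem_union_left _ h
        rw [hval, heq]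
        have := gameVal_true_le_false G (insert x D)
        omega

end Aux

/-- `γ_g'(G|S) ≤ γ_g'(G|(S ∪ {x})) + 2`. -/
theorem stmt2 {V : Type*} [Fintype V] (G : SimpleGraph V) (S : Finset V) (x : V) :
    gammaG' G S ≤ gammaG' G (insert x S) + 2 :=
  gameVal_insert_le G x (Finset.univ \ S).card S le_rfl false
end

section
/- For every partially dominated graph G|S, |\gamma_g(G|S) - \gamma_g'(G|S)| \le 1, i.e., the Dominator-start and Staller-start game domination numbers differ by at most one. -/
open Finset
open scoped Classical

variable {V : Type*}

lemma gameVal_univ_aux [Fintype V] (G : SimpleGraph V) (t : Bool) :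
    gameVal G t Finset.univ = 0 := by
  rw [gameVal]; simp

lemma gameVal_true_eq_aux [Fintype V] (G : SimpleGraph V) {D : Finset V}
    (h : D ≠ Finset.univ) :
    gameVal G true D = 1 + (legalMoves G D).attach.inf'
      ((Finset.attach_nonempty_iff).2 (legalMoves_nonempty G h))
      (fun v => gameVal G false (D ∪ closedNbhd G v.1)) := by
  rw [gameVal]; simp [h]

lemma gameVal_false_eq_aux [Fintype V] (G : SimpleGraph V) {D : Finset V}
    (h : D ≠ Finset.univ) :
    gameVal G false D = 1 + (legalMoves G D).attach.sup'
      ((Finset.attach_nonempty_iff).2 (legalMoves_nonempty G h))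
      (fun v => gameVal G true (D ∪ closedNbhd G v.1)) := by
  rw [gameVal]; simp [h]

lemma not_legal_aux [Fintype V] (G : SimpleGraph V) {D : Finset V} {v : V}
    (h : v ∉ legalMoves G D) : closedNbhd G v ⊆ D := by
  simpa [legalMoves] using h

/-- Continuation principle: a larger dominated set gives a smaller game value. -/
lemma gameVal_cont_aux [Fintype V] (G : SimpleGraph V) :
    ∀ (n : ℕ) (t : Bool) (A B : Finset V),
      (Finset.univ \ A).card ≤ n → A ⊆ B → gameVal G t B ≤ gameVal G t A := by
  intro n
  induction n with
  | zero =>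
    intro t A B hn hAB
    have hA : A = Finset.univ := by
      have h0 : (Finset.univ \ A) = ∅ := Finset.card_eq_zero.mp (Nat.le_antisymm hn (Nat.zero_le _))
      apply Finset.eq_univ_iff_forall.2
      intro x
      by_contra hx
      have : x ∈ Finset.univ \ A := Finset.mem_sdiff.2 ⟨Finset.mem_univ x, hx⟩
      simp [h0] at this
    have hB : B = Finset.univ := Finset.eq_univ_iff_forall.2 fun x => hAB (hA ▸ Finset.mem_univ x)
    subst hA; subst hB; exact le_rfl
  | succ n ih =>
    intro t A B hn hAB
    by_cases hB : B = Finset.univ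
    · subst hB; rw [gameVal_univ_aux]; exact Nat.zero_le _
    have hA : A ≠ Finset.univ := by
      intro h
      exact hB (Finset.eq_univ_iff_forall.2 fun x => hAB (h ▸ Finset.mem_univ x))
    have hneA : ((legalMoves G A).attach).Nonempty :=
      (Finset.attach_nonempty_iff).2 (legalMoves_nonempty G hA)
    have hneB : ((legalMoves G B).attach).Nonempty :=
      (Finset.attach_nonempty_iff).2 (legalMoves_nonempty G hB)
    cases t with
    | true =>
      conv_rhs => rw [gameVal_true_eq_aux G hA]
      obtain ⟨v₀, hv₀mem, hv₀⟩ := Finset.exists_mem_eq_inf' hneA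
        (fun v => gameVal G false (A ∪ closedNbhd G v.1))
      rw [hv₀]
      set X := A ∪ closedNbhd G v₀.1 with hXdef
      have hXlt : (Finset.univ \ X).card < (Finset.univ \ A).card := card_lt_of_legal G v₀.2
      have hXn : (Finset.univ \ X).card ≤ n := by omega
      by_cases hvB : v₀.1 ∈ legalMoves G B
      · rw [gameVal_true_eq_aux G hB]
        have h1 : (legalMoves G B).attach.inf' hneB
            (fun v => gameVal G false (B ∪ closedNbhd G v.1))
            ≤ gameVal G false (B ∪ closedNbhd G v₀.1) :=
          Finset.inf'_le _ (Finset.mem_attach _ ⟨v₀.1, hvB⟩)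
        have h2 : gameVal G false (B ∪ closedNbhd G v₀.1) ≤ gameVal G false X :=
          ih false X _ hXn (Finset.union_subset_union hAB le_rfl)
        omega
      · have hNB : closedNbhd G v₀.1 ⊆ B := not_legal_aux G hvB
        have hXB : X ⊆ B := Finset.union_subset hAB hNB
        have h1 : gameVal G true B ≤ gameVal G true X := ih true X B hXn hXB
        -- P(X): gameVal G true X ≤ 1 + gameVal G false X
        have h2 : gameVal G true X ≤ 1 + gameVal G false X := by
          by_cases hX : X = Finset.univ
          · rw [hX, gameVal_univ_aux]; exact Nat.zero_le _
          · have hneX : ((legalMoves G X).attach).Nonempty :=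
              (Finset.attach_nonempty_iff).2 (legalMoves_nonempty G hX)
            rw [gameVal_true_eq_aux G hX]
            obtain ⟨w, hw⟩ := id hneX
            have h3 : (legalMoves G X).attach.inf' hneX
                (fun v => gameVal G false (X ∪ closedNbhd G v.1))
                ≤ gameVal G false (X ∪ closedNbhd G w.1) := Finset.inf'_le _ hw
            have h4 : gameVal G false (X ∪ closedNbhd G w.1) ≤ gameVal G false X :=
              ih false X _ hXn Finset.subset_union_left
            omega
        omega
    | false =>
      rw [gameVal_false_eq_aux G hA, gameVal_false_eq_aux G hB]
      have hsup : (legalMoves G B).attach.sup' hneB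
          (fun v => gameVal G true (B ∪ closedNbhd G v.1))
          ≤ (legalMoves G A).attach.sup' hneA
            (fun v => gameVal G true (A ∪ closedNbhd G v.1)) := by
        apply Finset.sup'_le
        intro w _
        have hwA : w.1 ∈ legalMoves G A := by
          by_contra hc
          have h1 : closedNbhd G w.1 ⊆ A := not_legal_aux G hc
          have h2 : w.1 ∈ legalMoves G B := w.2
          simp only [legalMoves, Finset.mem_filter, Finset.mem_univ, true_and] at h2
          exact h2 (h1.trans hAB)
        have hlt : (Finset.univ \ (A ∪ closedNbhd G w.1)).card < (Finset.univ \ A).card :=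
          card_lt_of_legal G hwA
        have h1 : gameVal G true (B ∪ closedNbhd G w.1)
            ≤ gameVal G true (A ∪ closedNbhd G w.1) :=
          ih true _ _ (by omega) (Finset.union_subset_union hAB le_rfl)
        exact h1.trans (Finset.le_sup' (fun v : {x // x ∈ legalMoves G A} => gameVal G true (A ∪ closedNbhd G v.1)) (Finset.mem_attach _ ⟨w.1, hwA⟩))
      omega

/-- For every partially dominated graph `G|S`, `|γ_g(G|S) - γ_g'(G|S)| ≤ 1`. -/
theorem stmt7 {V : Type*} [Fintype V] (G : SimpleGraph V) (S : Finset V) :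
    |(gammaG G S : ℤ) - (gammaG' G S : ℤ)| ≤ 1 := by
  have key : gammaG G S ≤ gammaG' G S + 1 ∧ gammaG' G S ≤ gammaG G S + 1 := by
    unfold gammaG gammaG'
    by_cases hS : S = Finset.univ
    · subst hS; rw [gameVal_univ_aux, gameVal_univ_aux]; omega
    · have hne : ((legalMoves G S).attach).Nonempty :=
        (Finset.attach_nonempty_iff).2 (legalMoves_nonempty G hS)
      constructor
      · rw [gameVal_true_eq_aux G hS]
        obtain ⟨w, hw⟩ := id hne
        have h1 : (legalMoves G S).attach.inf' hne
            (fun v => gameVal G false (S ∪ closedNbhd G v.1))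
            ≤ gameVal G false (S ∪ closedNbhd G w.1) := Finset.inf'_le _ hw
        have h2 : gameVal G false (S ∪ closedNbhd G w.1) ≤ gameVal G false S :=
          gameVal_cont_aux G _ false S _ le_rfl Finset.subset_union_left
        omega
      · rw [gameVal_false_eq_aux G hS]
        have h1 : (legalMoves G S).attach.sup' hne
            (fun v => gameVal G true (S ∪ closedNbhd G v.1)) ≤ gameVal G true S := by
          apply Finset.sup'_le
          intro w _
          exact gameVal_cont_aux G _ true S _ le_rfl Finset.subset_union_left
        omega
  rw [abs_le]
  constructor <;> [skip; skip] <;> push_cast <;> omega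
end
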